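/- Let F be a graph with δ(F) ≥ 1 and suppose there exist constants D and c_F with wsat(K_n, F) ≥ (δ(F)-1)n + D for all n, and wsat(K_n,F) = (c_F + o(1))n. Then c_F = δ(F) - 1, and there exists a constant d_F such that wsat(K_n, F) = (δ(F)-1)n + d_F for all sufficiently large n. -/

import Mathlib

open SimpleGraph Finset Filter

def HasCopy {W V : Type*} (F : SimpleGraph W) (G : SimpleGraph V) : Prop :=
  ∃ f : W ↪ V, ∀ a b, F.Adj a b → G.Adj (f a) (f b)

def NewCopyStep {W V : Type*} (F : SimpleGraph W) (H : SimpleGraph V) (x y : V) : Prop :=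
  ¬ H.Adj x y ∧
  ∃ f : W ↪ V, ∃ a b : W, F.Adj a b ∧ f a = x ∧ f b = y ∧
    ∀ c d, F.Adj c d → (H ⊔ SimpleGraph.fromEdgeSet {s(x, y)}).Adj (f c) (f d)

def SatProcess {W V : Type*} (F : SimpleGraph W) : SimpleGraph V → List (V × V) → Prop
  | _, [] => True
  | H, e :: l => NewCopyStep F H e.1 e.2 ∧
      SatProcess F (H ⊔ SimpleGraph.fromEdgeSet {s(e.1, e.2)}) l

def addEdges {V : Type*} (H : SimpleGraph V) (l : List (V × V)) : SimpleGraph V :=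
  H ⊔ SimpleGraph.fromEdgeSet {e | ∃ p ∈ l, e = s(p.1, p.2)}

def WeaklySaturated {W V : Type*} (G : SimpleGraph V) (F : SimpleGraph W)
    (H : SimpleGraph V) : Prop :=
  H ≤ G ∧ ¬ HasCopy F H ∧ ∃ l : List (V × V), SatProcess F H l ∧ addEdges H l = G

noncomputable def wsat {W V : Type*} (G : SimpleGraph V) (F : SimpleGraph W) : ℕ :=
  sInf {m | ∃ H, WeaklySaturated G F H ∧ H.edgeSet.ncard = m}

/-!
Take a weakly `(K_n, F)`-saturated graph `H` and add a vertex `v` joined to `δ(F) - 1` old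
vertices, namely the images of all neighbours but one of a minimum-degree vertex `a` of `F`.
No copy of `F` passes through `v`, which has fewer than `δ(F)` neighbours, so the new graph is
still `F`-free. Replaying the saturation process of `H` completes the clique on the old
vertices; after that each missing edge `vw` creates a copy of `F` in which `v` plays `a`.
Hence `wsat(n + 1, F) ≤ wsat(n, F) + δ(F) - 1`, so `wsat(n, F) - (δ(F) - 1) n` is a
non-increasing integer sequence, bounded below by `D`, hence eventually constant; comparing
with `(c + o(1)) n` then gives `c = δ(F) - 1`.
-/

section AddEdges

variable {V W : Type*}

lemma addEdges_nil (H : SimpleGraph V) : addEdges H [] = H := by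
  simp [addEdges]

lemma addEdges_cons (H : SimpleGraph V) (p : V × V) (l : List (V × V)) :
    addEdges H (p :: l) = addEdges (H ⊔ fromEdgeSet {s(p.1, p.2)}) l := by
  ext x y
  simp only [addEdges, sup_adj, fromEdgeSet_adj, Set.mem_ofPred_eq, Set.mem_singleton_iff,
    List.mem_cons, exists_eq_or_imp]
  tauto

lemma addEdges_append (H : SimpleGraph V) (l₁ l₂ : List (V × V)) :
    addEdges H (l₁ ++ l₂) = addEdges (addEdges H l₁) l₂ := by
  induction l₁ generalizing H with
  | nil => rw [addEdges_nil, List.nil_append]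
  | cons p l ih => rw [List.cons_append, addEdges_cons, addEdges_cons, ih]

lemma le_addEdges (H : SimpleGraph V) (l : List (V × V)) : H ≤ addEdges H l :=
  le_sup_left

lemma comap_sup_fromEdgeSet_image (j : V ↪ W) (G : SimpleGraph W) (E : Set (Sym2 V)) :
    (G ⊔ fromEdgeSet (j.sym2Map '' E)).comap j = G.comap j ⊔ fromEdgeSet E := by
  ext x y
  have : s(j x, j y) = j.sym2Map s(x, y) := rfl
  simp only [comap_adj, sup_adj, fromEdgeSet_adj, this, j.sym2Map.injective.mem_set_image,
    j.injective.ne_iff]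

lemma comap_sup_edge (j : V ↪ W) (G : SimpleGraph W) (x y : V) :
    (G ⊔ fromEdgeSet {s(j x, j y)}).comap j = G.comap j ⊔ fromEdgeSet {s(x, y)} := by
  rw [← comap_sup_fromEdgeSet_image, Set.image_singleton]
  rfl

lemma comap_addEdges_map (j : V ↪ W) (G : SimpleGraph W) (l : List (V × V)) :
    (addEdges G (l.map (Prod.map j j))).comap j = addEdges (G.comap j) l := by
  rw [addEdges, addEdges, ← comap_sup_fromEdgeSet_image]
  congr
  ext e
  simp [eq_comm]

end AddEdges

section SatProcess

variable {U V W : Type*} (F : SimpleGraph U)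

lemma satProcess_append (H : SimpleGraph V) (l₁ l₂ : List (V × V))
    (h₁ : SatProcess F H l₁) (h₂ : SatProcess F (addEdges H l₁) l₂) :
    SatProcess F H (l₁ ++ l₂) := by
  induction l₁ generalizing H with
  | nil => rwa [addEdges_nil] at h₂
  | cons p l ih => exact ⟨h₁.1, ih _ h₁.2 (by rwa [addEdges_cons] at h₂)⟩

variable {F}

lemma NewCopyStep.mono {G G' : SimpleGraph V} {x y : V} (h : NewCopyStep F G x y)
    (hle : G ≤ G') (hxy : ¬ G'.Adj x y) : NewCopyStep F G' x y := by
  obtain ⟨-, f, a, b, hab, ha, hb, hf⟩ := h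
  exact ⟨hxy, f, a, b, hab, ha, hb, fun c d hcd => sup_le_sup_right hle _ (hf c d hcd)⟩

lemma NewCopyStep.of_comap {G : SimpleGraph W} (j : V ↪ W) {x y : V}
    (h : NewCopyStep F (G.comap j) x y) : NewCopyStep F G (j x) (j y) := by
  obtain ⟨hxy, f, a, b, hab, rfl, rfl, hf⟩ := h
  refine ⟨hxy, f.trans j, a, b, hab, rfl, rfl, fun c d hcd => ?_⟩
  have := hf c d hcd
  rwa [← comap_sup_edge] at this

lemma SatProcess.of_comap (j : V ↪ W) {G : SimpleGraph W} {l : List (V × V)}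
    (h : SatProcess F (G.comap j) l) : SatProcess F G (l.map (Prod.map j j)) := by
  induction l generalizing G with
  | nil => trivial
  | cons p l ih =>
    exact ⟨h.1.of_comap j, ih ((comap_sup_edge j G p.1 p.2).symm ▸ h.2)⟩

/-- Copies only multiply as edges are added, so each step needs to be checked in the starting
graph only. -/
lemma satProcess_of_newCopyStep {G : SimpleGraph V} {l : List (V × V)}
    (hl : (l.map fun p => s(p.1, p.2)).Nodup) (h : ∀ p ∈ l, NewCopyStep F G p.1 p.2) :
    SatProcess F G l := by
  induction l generalizing G with
  | nil => trivial
  | cons p l ih =>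
    rw [List.map_cons, List.nodup_cons] at hl
    refine ⟨h p List.mem_cons_self, ih hl.2 fun q hq => ?_⟩
    have hq' := h q (List.mem_cons_of_mem _ hq)
    refine hq'.mono le_sup_left ?_
    rintro (hG | ⟨hqp, -⟩)
    · exact hq'.1 hG
    · exact hl.1 (List.mem_map.mpr ⟨q, hq, hqp⟩)

end SatProcess

section Extension

variable {U V W : Type*} {F : SimpleGraph U}

def starGraphOn (v : W) (C : Finset W) : SimpleGraph W :=
  SimpleGraph.fromRel fun x y => x = v ∧ y ∈ C

lemma starGraphOn_adj {v x y : W} {C : Finset W} :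
    (starGraphOn v C).Adj x y ↔ x ≠ y ∧ (x = v ∧ y ∈ C ∨ y = v ∧ x ∈ C) :=
  fromRel_adj _ _ _

lemma ncard_edgeSet_starGraphOn_le (v : W) (C : Finset W) :
    (starGraphOn v C).edgeSet.ncard ≤ C.card := by
  have hsub : (starGraphOn v C).edgeSet ⊆ (fun x => s(v, x)) '' C := by
    intro e he
    induction e with
    | h x y =>
      rcases (starGraphOn_adj.mp he).2 with ⟨rfl, hy⟩ | ⟨rfl, hx⟩
      · exact ⟨y, hy, rfl⟩
      · exact ⟨x, hx, Sym2.eq_swap⟩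
  calc (starGraphOn v C).edgeSet.ncard ≤ ((fun x => s(v, x)) '' C).ncard :=
        Set.ncard_le_ncard hsub (Set.toFinite _)
    _ ≤ (C : Set W).ncard := Set.ncard_image_le (Set.toFinite _)
    _ = C.card := Set.ncard_coe_finset C

/-- The copy is `ψ` followed by the transposition of `ψ b` and `w`. -/
lemma newCopyStep_of_clique {G : SimpleGraph W} {v w : W} (ψ : U ↪ W)
    {a b : U} (hab : F.Adj a b) (hψa : ψ a = v)
    (hclique : ∀ x y, x ≠ y → x ≠ v → y ≠ v → G.Adj x y)
    (hstar : ∀ d, F.Adj a d → d ≠ b → G.Adj v (ψ d)) (hwv : w ≠ v) (hvw : ¬ G.Adj v w) :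
    NewCopyStep F G v w := by
  classical
  set f : U ↪ W := ψ.trans (Equiv.swap (ψ b) w).toEmbedding
  have hf : ∀ d, d ≠ b → ψ d ≠ w → f d = ψ d := fun d hdb hdw =>
    Equiv.swap_apply_of_ne_of_ne (ψ.injective.ne hdb) hdw
  have hfa : f a = v := by
    rw [hf a hab.ne (hψa ▸ hwv.symm), hψa]
  have hfb : f b = w := Equiv.swap_apply_left _ _
  have hv : ∀ d, F.Adj a d → (G ⊔ fromEdgeSet {s(v, w)}).Adj v (f d) := by
    intro d had
    by_cases hdb : d = b
    · subst hdb
      exact Or.inr ⟨by rw [hfb]; rfl, hfb ▸ hwv.symm⟩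
    · have hGd := hstar d had hdb
      rw [hf d hdb (fun h => hvw (h ▸ hGd))]
      exact Or.inl hGd
  have hfv : ∀ c, c ≠ a → f c ≠ v := fun c hc h => hc (f.injective (h.trans hfa.symm))
  refine ⟨hvw, f, a, b, hab, hfa, hfb, fun c d hcd => ?_⟩
  by_cases hc : c = a
  · subst hc
    rw [hfa]
    exact hv d hcd
  by_cases hd : d = a
  · subst hd
    rw [hfa]
    exact (hv c hcd.symm).symm
  exact Or.inl (hclique _ _ (f.injective.ne hcd.ne) (hfv c hc) (hfv d hd))

lemma exists_satProcess_addEdges_eq_top [Fintype W] {G : SimpleGraph W}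
    {v : W} (ψ : U ↪ W) {a b : U} (hab : F.Adj a b) (hψa : ψ a = v)
    (hclique : ∀ x y, x ≠ y → x ≠ v → y ≠ v → G.Adj x y)
    (hstar : ∀ d, F.Adj a d → d ≠ b → G.Adj v (ψ d)) :
    ∃ l, SatProcess F G l ∧ addEdges G l = ⊤ := by
  classical
  set ws := (Finset.univ.filter fun w => w ≠ v ∧ ¬ G.Adj v w).toList
  have hws : ∀ w, w ∈ ws ↔ w ≠ v ∧ ¬ G.Adj v w := by simp [ws]
  refine ⟨ws.map fun w => (v, w), satProcess_of_newCopyStep ?_ ?_, ?_⟩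
  · rw [List.map_map]
    exact (Finset.nodup_toList _).map fun w w' h => Sym2.congr_right.mp h
  · simp only [List.mem_map]
    rintro _ ⟨w, hw, rfl⟩
    exact newCopyStep_of_clique ψ hab hψa hclique hstar ((hws w).mp hw).1 ((hws w).mp hw).2
  · have hv : ∀ w, w ≠ v → (addEdges G (ws.map fun w => (v, w))).Adj v w := by
      intro w hwv
      by_cases hG : G.Adj v w
      · exact le_addEdges _ _ hG
      · exact Or.inr ⟨⟨(v, w), List.mem_map.mpr ⟨w, (hws w).mpr ⟨hwv, hG⟩, rfl⟩, rfl⟩, hwv.symm⟩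
    ext x y
    simp only [top_adj]
    refine ⟨Adj.ne, fun hxy => ?_⟩
    by_cases hx : x = v
    · rw [hx]
      exact hv y (by rwa [← hx, ne_comm])
    by_cases hy : y = v
    · rw [hy]
      exact (hv x (by rwa [← hy])).symm
    exact le_addEdges _ _ (hclique x y hxy hx hy)

lemma not_hasCopy_of_comap [Fintype U] [DecidableRel F.Adj] {G : SimpleGraph W} (j : V ↪ W)
    {v : W} (hj : ∀ y, (∃ x, j x = y) ↔ y ≠ v) (hfree : ¬ HasCopy F (G.comap j))
    (C : Finset W) (hvC : ∀ y, G.Adj v y → y ∈ C) (hC : C.card < F.minDegree) :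
    ¬ HasCopy F G := by
  rintro ⟨f, hf⟩
  by_cases hv : ∃ c, f c = v
  · obtain ⟨c, hc⟩ := hv
    have hsub : (F.neighborFinset c).map f ⊆ C := by
      intro y hy
      obtain ⟨d, hd, rfl⟩ := Finset.mem_map.mp hy
      exact hvC _ (hc ▸ hf c d ((F.mem_neighborFinset c d).mp hd))
    have := Finset.card_le_card hsub
    rw [Finset.card_map, card_neighborFinset_eq_degree] at this
    exact absurd (F.minDegree_le_degree c) (by omega)
  · push Not at hv
    choose g hg using fun c => (hj (f c)).mpr (hv c)
    refine hfree ⟨⟨g, fun c d h => f.injective (by rw [← hg, ← hg, h])⟩, fun c d hcd => ?_⟩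
    show G.Adj (j (g c)) (j (g d))
    rw [hg, hg]
    exact hf c d hcd

lemma nonempty_of_minDegree_pos [Fintype U] [DecidableRel F.Adj] (hδ : 0 < F.minDegree) :
    Nonempty U := by
  by_contra hU
  rw [not_nonempty_iff] at hU
  exact hδ.ne' F.minDegree_of_subsingleton

lemma Function.Embedding.exists_apply_eq_of_card_le [Fintype U] [Fintype W]
    (h : Fintype.card U ≤ Fintype.card W) (a : U) (v : W) : ∃ ψ : U ↪ W, ψ a = v := by
  classical
  obtain ⟨ψ⟩ := Function.Embedding.nonempty_of_card_le h
  exact ⟨ψ.trans (Equiv.swap (ψ a) v).toEmbedding, Equiv.swap_apply_left _ _⟩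

lemma adj_of_comap_eq_top {G : SimpleGraph W} {j : V ↪ W} {v : W}
    (hj : ∀ y, (∃ x, j x = y) ↔ y ≠ v) (hG : G.comap j = ⊤) {x y : W} (hxy : x ≠ y)
    (hx : x ≠ v) (hy : y ≠ v) : G.Adj x y := by
  obtain ⟨x', rfl⟩ := (hj x).mpr hx
  obtain ⟨y', rfl⟩ := (hj y).mpr hy
  exact (hG ▸ j.injective.ne_iff.mp hxy : (G.comap j).Adj x' y')

lemma comap_map_sup_starGraphOn (H : SimpleGraph V) (j : V ↪ W) {v : W} (hjv : ∀ x, j x ≠ v)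
    (C : Finset W) : (H.map j ⊔ starGraphOn v C).comap j = H := by
  ext x y
  simp [starGraphOn_adj, hjv]

lemma mem_of_adj_map_sup_starGraphOn {H : SimpleGraph V} {j : V ↪ W} {v : W}
    (hjv : ∀ x, j x ≠ v) {C : Finset W} {y : W} (hy : (H.map j ⊔ starGraphOn v C).Adj v y) :
    y ∈ C := by
  rcases hy with ⟨-, x, -, -, hx, -⟩ | hy
  · exact absurd hx (hjv x)
  · rcases starGraphOn_adj.mp hy with ⟨hne, ⟨-, hyC⟩ | ⟨rfl, -⟩⟩
    exacts [hyC, absurd rfl hne]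

/-- The new vertex `v` is joined to the images of `δ(F) - 1` neighbours of a vertex `a` of
minimum degree, placed by an embedding `ψ` with `ψ a = v`. -/
theorem WeaklySaturated.exists_extend [Fintype U] [DecidableRel F.Adj] [Fintype W]
    {H : SimpleGraph V} (hH : WeaklySaturated ⊤ F H) (j : V ↪ W) {v : W}
    (hj : ∀ y, (∃ x, j x = y) ↔ y ≠ v) (hUW : Fintype.card U ≤ Fintype.card W)
    (hδ : 0 < F.minDegree) :
    ∃ H' : SimpleGraph W, WeaklySaturated ⊤ F H' ∧
      H'.edgeSet.ncard ≤ H.edgeSet.ncard + (F.minDegree - 1) := by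
  classical
  obtain ⟨-, hfree, l, hl, hadd⟩ := hH
  have := nonempty_of_minDegree_pos hδ
  obtain ⟨a, ha⟩ := F.exists_minimal_degree_vertex
  obtain ⟨b, hab⟩ := (F.degree_pos_iff_exists_adj a).mp (ha ▸ hδ)
  obtain ⟨ψ, hψa⟩ := Function.Embedding.exists_apply_eq_of_card_le hUW a v
  set C := ((F.neighborFinset a).erase b).map ψ
  have hC : C.card = F.minDegree - 1 := by
    rw [Finset.card_map, Finset.card_erase_of_mem ((F.mem_neighborFinset a b).mpr hab),
      card_neighborFinset_eq_degree, ha]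
  have hjv : ∀ x, j x ≠ v := fun x => (hj _).mp ⟨x, rfl⟩
  set H' := H.map j ⊔ starGraphOn v C
  have hcomap : H'.comap j = H := comap_map_sup_starGraphOn H j hjv C
  refine ⟨H', ⟨le_top, ?_, ?_⟩, ?_⟩
  · exact not_hasCopy_of_comap j hj (hcomap ▸ hfree) C
      (fun y hy => mem_of_adj_map_sup_starGraphOn hjv hy) (by omega)
  · set G₁ := addEdges H' (l.map (Prod.map j j))
    have hG₁ : G₁.comap j = ⊤ := by rw [comap_addEdges_map, hcomap, hadd]
    have hstar : ∀ d, F.Adj a d → d ≠ b → G₁.Adj v (ψ d) := by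
      intro d had hdb
      refine le_addEdges _ _ (Or.inr (starGraphOn_adj.mpr ⟨?_, Or.inl ⟨rfl, ?_⟩⟩))
      · rw [← hψa]
        exact ψ.injective.ne (F.ne_of_adj had)
      · exact Finset.mem_map_of_mem ψ
          (Finset.mem_erase.mpr ⟨hdb, (F.mem_neighborFinset a d).mpr had⟩)
    obtain ⟨l₂, hl₂, hadd₂⟩ := exists_satProcess_addEdges_eq_top ψ hab hψa
      (fun x y => adj_of_comap_eq_top hj hG₁) hstar
    exact ⟨_, satProcess_append F H' _ l₂ (SatProcess.of_comap j (hcomap ▸ hl)) hl₂,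
      by rw [addEdges_append, hadd₂]⟩
  · calc H'.edgeSet.ncard ≤ (H.map j).edgeSet.ncard + (starGraphOn v C).edgeSet.ncard := by
          rw [edgeSet_sup]
          exact Set.ncard_union_le _ _
      _ ≤ H.edgeSet.ncard + (F.minDegree - 1) := by
          rw [edgeSet_map, Set.ncard_image_of_injective _ j.sym2Map.injective, ← hC]
          exact Nat.add_le_add_left (ncard_edgeSet_starGraphOn_le v C) _

end Extension

section Wsat

variable {U V : Type*} {F : SimpleGraph U}

lemma weaklySaturated_top_of_card_lt [Fintype U] [Fintype V]
    (h : Fintype.card V < Fintype.card U) : WeaklySaturated (⊤ : SimpleGraph V) F ⊤ :=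
  ⟨le_rfl, by rintro ⟨f, -⟩; exact (Fintype.card_le_of_embedding f).not_gt h, [], trivial,
    addEdges_nil _⟩

lemma wsat_le_ncard {G H : SimpleGraph V} (h : WeaklySaturated G F H) :
    wsat G F ≤ H.edgeSet.ncard :=
  Nat.sInf_le ⟨H, h, rfl⟩

lemma exists_weaklySaturated_ncard_eq_wsat {G : SimpleGraph V}
    (h : ∃ H, WeaklySaturated G F H) :
    ∃ H, WeaklySaturated G F H ∧ H.edgeSet.ncard = wsat G F := by
  obtain ⟨H, hH⟩ := h
  exact Nat.sInf_mem (s := {m | ∃ H, WeaklySaturated G F H ∧ H.edgeSet.ncard = m})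
    ⟨_, H, hH, rfl⟩

variable [Fintype U] [DecidableRel F.Adj]

lemma exists_weaklySaturated_top_fin (hδ : 0 < F.minDegree) (n : ℕ) :
    ∃ H, WeaklySaturated (⊤ : SimpleGraph (Fin n)) F H := by
  induction n with
  | zero =>
    refine ⟨⊤, weaklySaturated_top_of_card_lt ?_⟩
    rw [Fintype.card_fin, Fintype.card_pos_iff]
    exact nonempty_of_minDegree_pos hδ
  | succ n ih =>
    by_cases hn : n + 1 < Fintype.card U
    · exact ⟨⊤, weaklySaturated_top_of_card_lt (by rwa [Fintype.card_fin])⟩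
    obtain ⟨H, hH⟩ := ih
    obtain ⟨H', hH', -⟩ := hH.exists_extend Fin.castSuccEmb (fun _ => Fin.exists_castSucc_eq)
      (by rw [Fintype.card_fin]; omega) hδ
    exact ⟨H', hH'⟩

lemma wsat_fin_succ_le (hδ : 0 < F.minDegree) {n : ℕ} (hn : Fintype.card U ≤ n + 1) :
    wsat (⊤ : SimpleGraph (Fin (n + 1))) F ≤
      wsat (⊤ : SimpleGraph (Fin n)) F + (F.minDegree - 1) := by
  obtain ⟨H, hH, hcard⟩ :=
    exists_weaklySaturated_ncard_eq_wsat (exists_weaklySaturated_top_fin hδ n)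
  obtain ⟨H', hH', hcard'⟩ := hH.exists_extend Fin.castSuccEmb (fun _ => Fin.exists_castSucc_eq)
    (by rwa [Fintype.card_fin]) hδ
  exact (wsat_le_ncard hH').trans (hcard ▸ hcard')

end Wsat

lemma exists_eventually_eq_of_succ_le {u : ℕ → ℤ} (N : ℕ) (hu : ∀ n ≥ N, u (n + 1) ≤ u n)
    (hbdd : BddBelow (Set.range u)) : ∃ d, ∀ᶠ n in atTop, u n = d := by
  have hanti : Antitone fun m => u (m + N) :=
    antitone_nat_of_succ_le fun m => by rw [Nat.add_right_comm]; exact hu _ (Nat.le_add_left _ _)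
  have hlim := tendsto_atTop_ciInf hanti (hbdd.mono (Set.range_comp_subset_range _ u))
  rw [tendsto_add_atTop_iff_nat, nhds_discrete, tendsto_pure] at hlim
  exact ⟨_, hlim⟩

lemma eq_of_eventually_mul_eq {c k d : ℝ} {ε : ℕ → ℝ} (hε : Tendsto ε atTop (nhds 0))
    (h : ∀ᶠ n : ℕ in atTop, (c + ε n) * n = k * n + d) : c = k := by
  have hc : Tendsto (fun n => c + ε n) atTop (nhds c) := by
    simpa using tendsto_const_nhds.add hε
  have hk : Tendsto (fun n : ℕ => k + d / n) atTop (nhds k) := by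
    simpa using tendsto_const_nhds.add (tendsto_const_div_atTop_nhds_zero_nat d)
  refine tendsto_nhds_unique (hc.congr' ?_) hk
  filter_upwards [h, eventually_gt_atTop 0] with n hn hpos
  have : (n : ℝ) ≠ 0 := by positivity
  field_simp
  linarith

/-- if `wsat(K_n, F) ≥ (δ(F)-1)n + D` for all `n` and
`wsat(K_n, F) = (c_F + o(1))n`, then `c_F = δ(F) - 1` and `wsat(K_n, F) = (δ(F)-1)n + d_F`
for some constant `d_F` and all large `n`. -/
theorem stmt8 {s : ℕ} (F : SimpleGraph (Fin s)) [DecidableRel F.Adj]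
    (hδ : 1 ≤ F.minDegree) (D : ℝ)
    (hlow : ∀ n : ℕ, ((F.minDegree : ℝ) - 1) * n + D ≤ (wsat (⊤ : SimpleGraph (Fin n)) F : ℝ))
    (c : ℝ) (ε : ℕ → ℝ) (hε : Tendsto ε atTop (nhds 0))
    (hasymp : ∀ n : ℕ, (wsat (⊤ : SimpleGraph (Fin n)) F : ℝ) = (c + ε n) * n) :
    c = (F.minDegree : ℝ) - 1 ∧
    ∃ d : ℝ, ∀ᶠ n in atTop,
      (wsat (⊤ : SimpleGraph (Fin n)) F : ℝ) = ((F.minDegree : ℝ) - 1) * n + d := by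
  set k := F.minDegree - 1
  have hk : (k : ℝ) = F.minDegree - 1 := Nat.cast_pred hδ
  set u : ℕ → ℤ := fun n => wsat (⊤ : SimpleGraph (Fin n)) F - k * n
  obtain ⟨d, hd⟩ : ∃ d, ∀ᶠ n in atTop, u n = d := by
    refine exists_eventually_eq_of_succ_le s (fun n hn => ?_) ⟨⌈D⌉, ?_⟩
    · have h : (wsat (⊤ : SimpleGraph (Fin (n + 1))) F : ℤ) ≤
          wsat (⊤ : SimpleGraph (Fin n)) F + k := by
        exact_mod_cast wsat_fin_succ_le hδ (n := n) (by rw [Fintype.card_fin]; omega)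
      simp only [u]
      push_cast
      linarith
    · rintro _ ⟨n, rfl⟩
      rw [Int.ceil_le]
      push_cast [u, hk]
      linarith [hlow n]
  have hW : ∀ᶠ n in atTop,
      (wsat (⊤ : SimpleGraph (Fin n)) F : ℝ) = ((F.minDegree : ℝ) - 1) * n + d := by
    filter_upwards [hd] with n hn
    rw [← hk, ← hn]
    push_cast [u]
    ring
  exact ⟨eq_of_eventually_mul_eq hε (hW.mono fun n hn => (hasymp n).symm.trans hn), d, hW⟩
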